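/- arXiv:1910.14081 — 2 statements merged into one kernel-verified Lean document; each statement's English description precedes it below -/
import Mathlib

section
/- Let m > 0. Let f: ℝⁿ → ℝ be convex, differentiable, and bounded below, and for each ordered pair i ≠ j let g_ij: ℝ² → ℝ be twice continuously differentiable, convex, and symmetric. Define D = {x ∈ ℝⁿ : g_ij(x_i,x_j) = 0 for some i ≠ j} and Φ(x) := f(x) + ½ ∑_{i≠j} max{g_ij(x_i,x_j), 0}. Let {x^k} be generated by x^{k+1} = x^k − (G^k)⁻¹ g^k, where each G^k is a positive-definite diagonal matrix with G^k ⪯ mI, g^k is the vector with components g_i^k = ∂f/∂x_i(x^k) + ∑_{j ∈ N_i(x^k)} ∂g_ij/∂x_i(x_i^k, x_j^k) (a subgradient of Φ at x^k, equal to ∇Φ(x^k) when x^k ∉ D). Assume that x^k ∈ D for at most finitely many k, and that for every k with x^k ∉ D, Φ(y) ≤ Φ(x^k) + (g^k)ᵀ(y − x^k) + ½‖y − x^k‖²_{G^k} for all y with Φ(y) ≤ Φ(x^k). Then lim_{k→∞} ‖g^k‖ = 0, and every limit point of the sequence {x^k} is a global minimizer of Φ; in particular, if {x^k} converges, its limit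 is a global minimizer of Φ. -/
/-!
Off the finite set of iterates lying in `D`, every pair term `max (g_ij, 0)` is locally either
`g_ij` or `0`, so `Φ` is differentiable there and, by the symmetry `g_ij(a, b) = g_ji(b, a)`,
its gradient is exactly `g^k`. Along the segment from `x^k` to `x^{k+1} = x^k - (G^k)⁻¹ g^k` the
quadratic upper bound, valid only on the sublevel set of `Φ (x^k)`, propagates from `t = 0` to
`t = 1` by continuous induction (the derivative `-‖g^k‖²_{(G^k)⁻¹} < 0` starts it), which gives the
sufficient decrease `Φ (x^{k+1}) + ‖g^k‖² / (2m) ≤ Φ (x^k)`. As `Φ` is bounded below, `g^k → 0`;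
convexity makes `Φ (x^k) + ⟪g^k, y - x^k⟫ ≤ Φ y`, and passing to the limit along a subsequence
shows that every cluster point minimizes `Φ`.
-/

open Filter Set Topology

lemma ConvexOn.finset_sum {𝕜 E β ι : Type*} [Semiring 𝕜] [PartialOrder 𝕜] [AddCommMonoid E]
    [AddCommMonoid β] [PartialOrder β] [IsOrderedAddMonoid β] [SMul 𝕜 E] [Module 𝕜 β]
    {s : Set E} (hs : Convex 𝕜 s) {t : Finset ι} {f : ι → E → β}
    (hf : ∀ i ∈ t, ConvexOn 𝕜 s (f i)) : ConvexOn 𝕜 s fun x => ∑ i ∈ t, f i x := by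
  classical
  induction t using Finset.induction_on with
  | empty => simpa using convexOn_const 0 hs
  | insert a t ha ih =>
    simp only [Finset.sum_insert ha]
    exact (hf a (t.mem_insert_self a)).add (ih fun i hi => hf i (Finset.mem_insert_of_mem hi))

lemma Finset.sum_sum_ne_comm {ι M : Type*} [Fintype ι] [DecidableEq ι] [AddCommMonoid M]
    (F : ι → ι → M) :
    ∑ i, ∑ j ∈ univ.filter (· ≠ i), F j i = ∑ i, ∑ j ∈ univ.filter (· ≠ i), F i j :=
  Finset.sum_comm' fun _ _ => by simp [ne_comm]

lemma HasFDerivAt.max_zero_of_ne_zero {E : Type*} [NormedAddCommGroup E] [NormedSpace ℝ E]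
    {F : E → ℝ} {F' : E →L[ℝ] ℝ} {a : E} (hF : HasFDerivAt F F' a) (ha : F a ≠ 0) :
    HasFDerivAt (fun z => max (F z) 0) (if 0 < F a then F' else 0) a := by
  rcases ha.lt_or_gt with hneg | hpos
  · rw [if_neg hneg.not_gt]
    refine (hasFDerivAt_const 0 a).congr_of_eventuallyEq ?_
    filter_upwards [hF.continuousAt.eventually_lt continuousAt_const hneg] with z hz
    exact max_eq_right hz.le
  · rw [if_pos hpos]
    refine hF.congr_of_eventuallyEq ?_
    filter_upwards [continuousAt_const.eventually_lt hF.continuousAt hpos] with z hz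
    exact max_eq_left hz.le

lemma DifferentiableAt.hasFDerivAt_eq_partialDeriv {φ : ℝ → ℝ → ℝ} {s t : ℝ}
    (hφ : DifferentiableAt ℝ (fun p : ℝ × ℝ => φ p.1 p.2) (s, t)) :
    HasFDerivAt (fun p : ℝ × ℝ => φ p.1 p.2)
      (deriv (φ · t) s • ContinuousLinearMap.fst ℝ ℝ ℝ +
        deriv (φ s ·) t • ContinuousLinearMap.snd ℝ ℝ ℝ) (s, t) := by
  convert hφ.hasFDerivAt using 1
  have h₁ : HasDerivAt (φ · t) (fderiv ℝ (fun p : ℝ × ℝ => φ p.1 p.2) (s, t) (1, 0)) s :=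
    hφ.hasFDerivAt.comp_hasDerivAt (f := fun x : ℝ => (x, t)) s
      ((hasDerivAt_id' s).prodMk (hasDerivAt_const s t))
  have h₂ : HasDerivAt (φ s ·) (fderiv ℝ (fun p : ℝ × ℝ => φ p.1 p.2) (s, t) (0, 1)) t :=
    hφ.hasFDerivAt.comp_hasDerivAt t ((hasDerivAt_const t s).prodMk (hasDerivAt_id' t))
  ext1 <;> ext1 <;> simp [h₁.deriv, h₂.deriv]

section Gradient

variable {E : Type*} [NormedAddCommGroup E] [InnerProductSpace ℝ E] [CompleteSpace E]

lemma HasGradientAt.add {f h : E → ℝ} {f' h' a : E} (hf : HasGradientAt f f' a)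
    (hh : HasGradientAt h h' a) : HasGradientAt (fun z => f z + h z) (f' + h') a := by
  rw [hasGradientAt_iff_hasFDerivAt, map_add]
  exact hf.hasFDerivAt.add hh.hasFDerivAt

lemma HasGradientAt.hasDerivAt_comp_add_smul {Φ : E → ℝ} {G a : E} (hΦ : HasGradientAt Φ G a)
    (w : E) : HasDerivAt (fun t : ℝ => Φ (a + t • w)) (inner ℝ G w) 0 := by
  have hline : HasDerivAt (fun t : ℝ => a + t • w) w 0 := by
    simpa using ((hasDerivAt_id (0 : ℝ)).smul_const w).const_add a
  have hΦ' : HasFDerivAt Φ (InnerProductSpace.toDual ℝ E G) (a + (0 : ℝ) • w) := by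
    simpa using hΦ.hasFDerivAt
  exact hΦ'.comp_hasDerivAt 0 hline

lemma ConvexOn.add_inner_sub_le_of_hasGradientAt {Φ : E → ℝ} {G a : E}
    (hc : ConvexOn ℝ univ Φ) (hΦ : HasGradientAt Φ G a) (y : E) :
    Φ a + inner ℝ G (y - a) ≤ Φ y := by
  have hline : ConvexOn ℝ univ (fun t : ℝ => Φ (a + t • (y - a))) := by
    simpa [Function.comp_def, AffineMap.lineMap_apply, add_comm] using
      hc.comp_affineMap (AffineMap.lineMap a y)
  have hslope := hline.le_slope_of_hasDerivAt (mem_univ 0) (mem_univ 1) one_pos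
    (hΦ.hasDerivAt_comp_add_smul (y - a))
  simp only [slope_def_field, one_smul, zero_smul, add_zero, add_sub_cancel, sub_zero,
    div_one] at hslope
  linarith

end Gradient

lemma le_sub_half_of_quadratic_bound_on_sublevel {ψ : ℝ → ℝ} {ψ' q : ℝ}
    (hcont : ContinuousOn ψ (Icc 0 1)) (hderiv : HasDerivWithinAt ψ ψ' (Ioi 0) 0)
    (hψ' : ψ' < 0) (hq : 0 < q)
    (hbound : ∀ t ∈ Icc (0 : ℝ) 1, ψ t ≤ ψ 0 → ψ t ≤ ψ 0 - (t - t ^ 2 / 2) * q) :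
    ψ 1 ≤ ψ 0 - q / 2 := by
  set s := {t | ψ t ≤ ψ 0}
  have hclosed : IsClosed (s ∩ Icc 0 1) := by
    rw [inter_comm]
    exact hcont.preimage_isClosed_of_isClosed isClosed_Icc isClosed_Iic
  have hdescends_right : ∀ᶠ t in 𝓝[>] (0 : ℝ), ψ t < ψ 0 := by
    filter_upwards [hderiv.limsup_slope_le' (lt_irrefl (0 : ℝ)) hψ', self_mem_nhdsWithin]
      with t hslope (ht : 0 < t)
    rw [slope_def_field, sub_zero, div_neg_iff] at hslope
    rcases hslope with ⟨_, h⟩ | ⟨h, _⟩ <;> linarith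
  -- Away from `t = 0` the bound makes the inequality strict, so `s` extends to the right.
  have hopen : ∀ t ∈ s ∩ Ico 0 1, s ∈ 𝓝[>] t := by
    rintro t ⟨hts, ht0, ht1⟩
    rcases ht0.eq_or_lt with rfl | ht0
    · exact hdescends_right.mono fun _ => le_of_lt
    · have hlt : ψ t < ψ 0 := by
        have hgain : 0 < (t - t ^ 2 / 2) * q := mul_pos (by nlinarith) hq
        linarith [hbound t ⟨ht0.le, ht1.le⟩ hts]
      have hcont_t : ContinuousWithinAt ψ (Ioi t) t :=
        (hcont t ⟨ht0.le, ht1.le⟩).mono_of_mem_nhdsWithin (Icc_mem_nhdsGT_of_mem ⟨ht0.le, ht1⟩)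
      exact (hcont_t.eventually_lt continuousWithinAt_const hlt).mono fun _ => le_of_lt
  have h1 : (1 : ℝ) ∈ s :=
    hclosed.Icc_subset_of_forall_mem_nhdsWithin (by simp [s]) hopen ⟨zero_le_one, le_rfl⟩
  linarith [hbound 1 ⟨zero_le_one, le_rfl⟩ h1]

lemma HasGradientAt.sufficient_decrease_of_quadratic_bound {ι : Type*} [Fintype ι]
    {Φ : EuclideanSpace ℝ ι → ℝ} {G a b : EuclideanSpace ℝ ι} {d : ι → ℝ} {m : ℝ}
    (hΦ : Continuous Φ) (hG : HasGradientAt Φ G a) (hd : ∀ i, 0 < d i) (hdm : ∀ i, d i ≤ m)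
    (hb : ∀ i, b i = a i - G i / d i)
    (hupper : ∀ y, Φ y ≤ Φ a →
      Φ y ≤ Φ a + ∑ i, G i * (y i - a i) + (1 / 2) * ∑ i, d i * (y i - a i) ^ 2) :
    Φ b + (2 * m)⁻¹ * ‖G‖ ^ 2 ≤ Φ a := by
  by_cases hG0 : G = 0
  · have hba : b = a := by ext i; simp [hb, hG0]
    simp [hba, hG0]
  set q := ∑ i, G i ^ 2 / d i
  set w : EuclideanSpace ℝ ι := WithLp.toLp 2 fun i => -(G i / d i)
  have hq : 0 < q := by
    obtain ⟨i, hi⟩ : ∃ i, G i ≠ 0 := by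
      by_contra! h
      exact hG0 (by ext i; simp [h i])
    exact Finset.sum_pos' (fun i _ => div_nonneg (sq_nonneg _) (hd i).le)
      ⟨i, Finset.mem_univ i, div_pos (by positivity) (hd i)⟩
  have hslope : inner ℝ G w = -q := by
    simp only [w, q, PiLp.inner_apply, ← Finset.sum_neg_distrib]
    refine Finset.sum_congr rfl fun i _ => ?_
    simp only [RCLike.inner_apply, conj_trivial]
    field_simp [(hd i).ne']
  have hstep : ∀ (t : ℝ) i, (a + t • w) i - a i = -(t * (G i / d i)) := by
    intro t i; simp [w]
  have hψ := le_sub_half_of_quadratic_bound_on_sublevel (ψ := fun t => Φ (a + t • w))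
    (by fun_prop) (hG.hasDerivAt_comp_add_smul w).hasDerivWithinAt
    (by rw [hslope]; linarith) hq fun t _ ht => by
      simp only [zero_smul, add_zero] at ht ⊢
      have hlin : ∑ i, G i * ((a + t • w) i - a i) = -(t * q) := by
        simp only [hstep, q, Finset.mul_sum, ← Finset.sum_neg_distrib]
        exact Finset.sum_congr rfl fun i _ => by field_simp [(hd i).ne']
      have hquad : ∑ i, d i * ((a + t • w) i - a i) ^ 2 = t ^ 2 * q := by
        simp only [hstep, q, Finset.mul_sum]
        exact Finset.sum_congr rfl fun i _ => by field_simp [(hd i).ne']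
      linarith [hupper _ ht]
  have hnorm : ‖G‖ ^ 2 / m ≤ q := by
    rw [EuclideanSpace.norm_sq_eq, Finset.sum_div]
    exact Finset.sum_le_sum fun i _ => by
      rw [Real.norm_eq_abs, sq_abs]
      exact div_le_div_of_nonneg_left (sq_nonneg _) (hd i) (hdm i)
  have hb1 : a + (1 : ℝ) • w = b := by ext i; simp [w, hb, sub_eq_add_neg]
  simp only [hb1, zero_smul, add_zero] at hψ
  linarith [show (2 * m)⁻¹ * ‖G‖ ^ 2 = ‖G‖ ^ 2 / m / 2 by ring]

lemma tendsto_zero_of_sufficient_decrease {u s : ℕ → ℝ} {B c : ℝ} (hc : 0 < c)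
    (hB : ∀ k, B ≤ u k) (hs : ∀ k, 0 ≤ s k) (hdec : ∀ k, u (k + 1) + c * s k ≤ u k) :
    Tendsto s atTop (𝓝 0) := by
  have hanti : Antitone u :=
    antitone_nat_of_succ_le fun k => by nlinarith [hdec k, hs k]
  have hlim := tendsto_atTop_ciInf hanti ⟨B, by rintro _ ⟨k, rfl⟩; exact hB k⟩
  have hgap : Tendsto (fun k => (u k - u (k + 1)) / c) atTop (𝓝 0) := by
    simpa using (hlim.sub (hlim.comp (tendsto_add_atTop_nat 1))).div_const c
  refine squeeze_zero hs (fun k => ?_) hgap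
  rw [le_div_iff₀ hc]
  linarith [hdec k]

lemma MapClusterPt.le_of_subgradient_tendsto_zero {E : Type*} [NormedAddCommGroup E]
    [InnerProductSpace ℝ E] {Φ : E → ℝ} {x G : ℕ → E} {z : E}
    (hz : MapClusterPt z atTop x) (hΦ : ContinuousAt Φ z) (hG : Tendsto G atTop (𝓝 0))
    (hsub : ∀ᶠ k in atTop, ∀ y, Φ (x k) + inner ℝ (G k) (y - x k) ≤ Φ y) (y : E) :
    Φ z ≤ Φ y := by
  obtain ⟨φ, hφ, hxφ⟩ := hz.tendsto_subseq
  have hlim : Tendsto (fun k => Φ (x (φ k)) + inner ℝ (G (φ k)) (y - x (φ k))) atTop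
      (𝓝 (Φ z + inner ℝ (0 : E) (y - z))) :=
    (hΦ.tendsto.comp hxφ).add ((hG.comp hφ.tendsto_atTop).inner (tendsto_const_nhds.sub hxφ))
  rw [inner_zero_left, add_zero] at hlim
  exact le_of_tendsto hlim ((hφ.tendsto_atTop.eventually hsub).mono fun k hk => hk y)

section PairPenalty

variable {ι : Type*} [Fintype ι] {g : ι → ι → ℝ → ℝ → ℝ}

/-- `∂g_ij/∂x_i` at `a` if `j ∈ N_i(a)`, and `0` otherwise. -/
noncomputable def activePartialDeriv (g : ι → ι → ℝ → ℝ → ℝ) (a : EuclideanSpace ℝ ι)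
    (i j : ι) : ℝ :=
  if 0 < g i j (a i) (a j) then deriv (fun t => g i j t (a j)) (a i) else 0

lemma hasFDerivAt_max_zero_pair
    (hg : ∀ i j, i ≠ j → Differentiable ℝ fun p : ℝ × ℝ => g i j p.1 p.2)
    (hsym : ∀ i j a b, i ≠ j → g i j a b = g j i b a) {a : EuclideanSpace ℝ ι} {i j : ι}
    (hij : i ≠ j) (ha : g i j (a i) (a j) ≠ 0) :
    HasFDerivAt (fun z : EuclideanSpace ℝ ι => max (g i j (z i) (z j)) 0)
      (activePartialDeriv g a i j • EuclideanSpace.proj (𝕜 := ℝ) i +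
        activePartialDeriv g a j i • EuclideanSpace.proj (𝕜 := ℝ) j) a := by
  let P := (EuclideanSpace.proj (𝕜 := ℝ) (ι := ι) i).prod (EuclideanSpace.proj j)
  have hpair : HasFDerivAt (fun z : EuclideanSpace ℝ ι => g i j (z i) (z j)) _ a :=
    HasFDerivAt.comp (f := P) a (hg i j hij (a i, a j)).hasFDerivAt_eq_partialDeriv P.hasFDerivAt
  refine (hpair.max_zero_of_ne_zero ha).congr_fderiv ?_
  -- by symmetry, the partial derivative of `g_ij` in its second slot is `∂g_ji/∂x_j`
  have hswap : activePartialDeriv g a j i =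
      if 0 < g i j (a i) (a j) then deriv (fun t => g i j (a i) t) (a j) else 0 := by
    simp only [activePartialDeriv, hsym j i _ _ hij.symm]
  rw [hswap]
  ext v
  by_cases hpos : 0 < g i j (a i) (a j) <;> simp [activePartialDeriv, hpos, P]

variable [DecidableEq ι]

noncomputable def pairPenalty (g : ι → ι → ℝ → ℝ → ℝ) (z : EuclideanSpace ℝ ι) : ℝ :=
  (1 / 2) * ∑ i, ∑ j ∈ Finset.univ.filter (fun j => j ≠ i), max (g i j (z i) (z j)) 0

lemma pairPenalty_nonneg (g : ι → ι → ℝ → ℝ → ℝ) (z : EuclideanSpace ℝ ι) :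
    0 ≤ pairPenalty g z :=
  mul_nonneg (by norm_num) <| Finset.sum_nonneg fun _ _ =>
    Finset.sum_nonneg fun _ _ => le_max_right _ _

lemma continuous_pairPenalty (hg : ∀ i j, i ≠ j → Continuous fun p : ℝ × ℝ => g i j p.1 p.2) :
    Continuous (pairPenalty g) := by
  refine continuous_const.mul (continuous_finsetSum _ fun i _ =>
    continuous_finsetSum _ fun j hj => ?_)
  have hij : i ≠ j := (Finset.mem_filter.1 hj).2.symm
  exact ((hg i j hij).comp ((EuclideanSpace.proj (𝕜 := ℝ) i).continuous.prodMk
    (EuclideanSpace.proj (𝕜 := ℝ) j).continuous)).max continuous_const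

lemma convexOn_pairPenalty (hg : ∀ i j, i ≠ j → ConvexOn ℝ univ fun p : ℝ × ℝ => g i j p.1 p.2) :
    ConvexOn ℝ univ (pairPenalty g) := by
  refine .smul (by norm_num)
    (.finset_sum convex_univ fun i _ => .finset_sum convex_univ fun j hj => ?_)
  have hij : i ≠ j := (Finset.mem_filter.1 hj).2.symm
  simpa [Pi.sup_def] using ((hg i j hij).comp_linearMap
    ((EuclideanSpace.projₗ i).prod (EuclideanSpace.projₗ j))).sup (convexOn_const 0 convex_univ)

lemma hasGradientAt_pairPenalty
    (hg : ∀ i j, i ≠ j → Differentiable ℝ fun p : ℝ × ℝ => g i j p.1 p.2)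
    (hsym : ∀ i j a b, i ≠ j → g i j a b = g j i b a) {a : EuclideanSpace ℝ ι}
    (ha : ∀ i j, i ≠ j → g i j (a i) (a j) ≠ 0) :
    HasGradientAt (pairPenalty g) (WithLp.toLp 2 fun i =>
      ∑ j ∈ Finset.univ.filter (fun j => j ≠ i ∧ 0 < g i j (a i) (a j)),
        deriv (fun t => g i j t (a j)) (a i)) a := by
  have hterm : ∀ i, ∀ j ∈ Finset.univ.filter (fun j => j ≠ i),
      HasFDerivAt (fun z : EuclideanSpace ℝ ι => max (g i j (z i) (z j)) 0)
        (activePartialDeriv g a i j • EuclideanSpace.proj (𝕜 := ℝ) i +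
          activePartialDeriv g a j i • EuclideanSpace.proj (𝕜 := ℝ) j) a := fun i j hj => by
    have hij : i ≠ j := (Finset.mem_filter.1 hj).2.symm
    exact hasFDerivAt_max_zero_pair hg hsym hij (ha i j hij)
  have hsum := HasFDerivAt.fun_sum (u := Finset.univ) fun i _ => HasFDerivAt.fun_sum (hterm i)
  rw [hasGradientAt_iff_hasFDerivAt]
  refine (hsum.const_mul (1 / 2)).congr_fderiv ?_
  ext v
  simp only [FunLike.coe_smul, FunLike.coe_sum, Finset.sum_apply, FunLike.coe_add, Pi.add_apply,
    Pi.smul_apply, smul_eq_mul, Finset.sum_add_distrib, InnerProductSpace.toDual_apply_apply,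
    PiLp.proj_apply, PiLp.inner_apply, RCLike.inner_apply, conj_trivial]
  -- the two halves of the double sum coincide, which cancels the factor `1 / 2`
  rw [Finset.sum_sum_ne_comm (fun i j => activePartialDeriv g a i j * v i), ← two_mul,
    ← mul_assoc, one_div, inv_mul_cancel₀ two_ne_zero, one_mul]
  refine Finset.sum_congr rfl fun i _ => ?_
  rw [← Finset.filter_filter, Finset.sum_filter (fun j => 0 < g i j (a i) (a j)), Finset.mul_sum]
  refine Finset.sum_congr rfl fun j _ => ?_
  rw [activePartialDeriv]
  split_ifs <;> ring

end PairPenalty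

/-- quasi-Newton saddle-point dynamics: under quadratic upper bounds on
level sets away from the nondifferentiability set `D`, with positive-definite diagonal
scalings `G^k = diag(d k) ⪯ mI` and at most finitely many iterates in `D`, the
(sub)gradients `g^k` of `Φ(x) = f(x) + ½ ∑_{i≠j} max{g_ij(xᵢ,xⱼ), 0}` vanish in the
limit, every cluster point of the iterates is a global minimizer of `Φ`, and in
particular the limit of the iterates, if it exists, minimizes `Φ`. -/
theorem quasi_newton_dynamics_gradient_vanishes_and_cluster_points_minimize
    (n : ℕ) (m : ℝ) (hm : 0 < m)
    (f : EuclideanSpace ℝ (Fin n) → ℝ)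
    (hfc : ConvexOn ℝ Set.univ f) (hfd : Differentiable ℝ f)
    (hfB : BddBelow (Set.range f))
    (g : Fin n → Fin n → ℝ → ℝ → ℝ)
    (hgC : ∀ i j, i ≠ j → ContDiff ℝ 2 (fun p : ℝ × ℝ => g i j p.1 p.2))
    (hgc : ∀ i j, i ≠ j → ConvexOn ℝ Set.univ (fun p : ℝ × ℝ => g i j p.1 p.2))
    (hsym : ∀ i j a b, i ≠ j → g i j a b = g j i b a)
    (Φ : EuclideanSpace ℝ (Fin n) → ℝ)
    (hΦ : ∀ z : EuclideanSpace ℝ (Fin n), Φ z = f z +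
      (1/2) * ∑ i, ∑ j ∈ Finset.univ.filter (fun j => j ≠ i), max (g i j (z i) (z j)) 0)
    (x : ℕ → EuclideanSpace ℝ (Fin n))
    (d : ℕ → Fin n → ℝ) (hdpos : ∀ k i, 0 < d k i) (hdm : ∀ k i, d k i ≤ m)
    (gk : ℕ → EuclideanSpace ℝ (Fin n))
    (hgk : ∀ k i, gk k i = gradient f (x k) i +
      ∑ j ∈ Finset.univ.filter (fun j => j ≠ i ∧ 0 < g i j (x k i) (x k j)),
        deriv (fun t => g i j t (x k j)) (x k i))
    (hdyn : ∀ k i, x (k + 1) i = x k i - gk k i / d k i)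
    (hfinD : {k : ℕ | ∃ i j, i ≠ j ∧ g i j (x k i) (x k j) = 0}.Finite)
    (hupper : ∀ k, ¬(∃ i j, i ≠ j ∧ g i j (x k i) (x k j) = 0) →
      ∀ y : EuclideanSpace ℝ (Fin n), Φ y ≤ Φ (x k) →
        Φ y ≤ Φ (x k) + (∑ i, gk k i * (y i - x k i))
          + (1/2) * ∑ i, d k i * (y i - x k i)^2) :
    Tendsto (fun k => ‖gk k‖) atTop (nhds 0) ∧
    (∀ z : EuclideanSpace ℝ (Fin n), MapClusterPt z atTop x → ∀ y, Φ z ≤ Φ y) ∧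
    (∀ xs : EuclideanSpace ℝ (Fin n), Tendsto x atTop (nhds xs) → ∀ y, Φ xs ≤ Φ y) := by
  obtain rfl : Φ = fun z => f z + pairPenalty g z := funext hΦ
  have hgD i j (hij : i ≠ j) := (hgC i j hij).differentiable two_ne_zero
  have hcont := hfd.continuous.add (continuous_pairPenalty fun i j hij => (hgD i j hij).continuous)
  obtain ⟨B, hB⟩ := hfB
  obtain ⟨K, hK⟩ := hfinD.bddAbove
  have hgood k (hk : K < k) : ¬∃ i j, i ≠ j ∧ g i j (x k i) (x k j) = 0 :=
    fun hbad => (hK hbad).not_gt hk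
  have hgrad k (hk : K < k) : HasGradientAt (fun z => f z + pairPenalty g z) (gk k) (x k) := by
    convert (hfd (x k)).hasGradientAt.add (hasGradientAt_pairPenalty hgD hsym
      fun i j hij h0 => hgood k hk ⟨i, j, hij, h0⟩)
    ext i
    simp [hgk]
  have hdecrease k (hk : K < k) := (hgrad k hk).sufficient_decrease_of_quadratic_bound hcont
    (hdpos k) (hdm k) (hdyn k) (hupper k (hgood k hk))
  have hsq : Tendsto (fun k => ‖gk k‖ ^ 2) atTop (𝓝 0) := by
    refine (tendsto_add_atTop_iff_nat (K + 1)).1 <| tendsto_zero_of_sufficient_decrease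
      (u := fun k => f (x (k + (K + 1))) + pairPenalty g (x (k + (K + 1))))
      (c := (2 * m)⁻¹) (by positivity)
      (fun k => le_add_of_le_of_nonneg (hB ⟨_, rfl⟩) (pairPenalty_nonneg g _))
      (fun k => sq_nonneg _) fun k => ?_
    simpa [add_right_comm] using hdecrease (k + (K + 1)) (by omega)
  have hgk0 : Tendsto gk atTop (𝓝 0) :=
    tendsto_zero_iff_norm_tendsto_zero.2 (by simpa using hsq.sqrt)
  have hcluster z (hz : MapClusterPt z atTop x) y :=
    hz.le_of_subgradient_tendsto_zero hcont.continuousAt hgk0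
      ((eventually_gt_atTop K).mono fun k hk =>
        (hfc.add (convexOn_pairPenalty hgc)).add_inner_sub_le_of_hasGradientAt (hgrad k hk)) y
  exact ⟨tendsto_zero_iff_norm_tendsto_zero.1 hgk0, hcluster,
    fun xs hxs => hcluster xs hxs.mapClusterPt⟩
end

section
/- Let n ≥ 1, let M = {(i,j) : i ≠ j, i,j ∈ [n]}, and let m = |M|. For each i let p_i: ℝ → ℝ and for each (i,j) ∈ M let q_ij: ℝ → ℝ be continuous nondecreasing functions with p_i(0) = q_ij(0) = 0. Let L: ℝⁿ × ℝ^m → ℝ be continuously differentiable, convex in its first argument and concave in its second argument, and let (x̄, λ̄) ∈ ℝⁿ × [0,1]^m be a saddle point: L(p(x̄), q(λ)) ≤ L(p(x̄), q(λ̄)) ≤ L(p(x), q(λ̄)) for all x ∈ ℝⁿ and all λ ∈ [0,1]^m, where p(x) = (p_1(x_1),…,p_n(x_n)) and q(λ) = (q_ij(λ_ij))_{(i,j)∈M}. Define P_i(s) = ∫_{x̄_i}^{s} p_i(u) du, Q_ij(s) = ∫_{λ̄_ij}^{s} q_ij(u) du, and V(x,λ) = ∑_i D_{P_i}(x_i,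 x̄_i) + ∑_{(i,j)∈M} D_{Q_ij}(λ_ij, λ̄_ij). Let x: [0,∞) → ℝⁿ and λ: [0,∞) → [0,1]^m be differentiable trajectories satisfying, for all t ≥ 0, ẋ_i(t) = −∂L/∂u_i (p(x(t)), q(λ(t))) for each i, and λ̇_ij(t) = [∂L/∂v_ij (p(x(t)), q(λ(t)))]^{[0,1]}_{λ_ij(t)} for each (i,j) ∈ M, where [a]^{[0,1]}_λ equals a if 0 < λ < 1, max{0,a} if λ = 0, and min{0,a} if λ = 1. Then d/dt V(x(t), λ(t)) ≤ 0 for all t ≥ 0; i.e., V is nonincreasing along the trajectories. -/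
/-!
Along the flow `d/dt D_P(x, x̄) = (p(x) - p(x̄)) ẋ`, so
`V̇ = ⟨p(x) - p(x̄), -∇ᵤL⟩ + ⟨q(λ) - q(λ̄), [∇ᵥL]^{[0,1]}_λ⟩`.
As `q` is monotone and `λ̄ ∈ [0,1]`, the projection can only decrease the second term, so it is
at most `⟨q(λ) - q(λ̄), ∇ᵥL⟩`. The first-order characterisations of convexity in `u` and concavity
in `v` then bound `V̇` by `L(p(x̄), q(λ)) - L(p(x), q(λ̄))`, which is nonpositive by the two
saddle-point inequalities.
-/

section Convexity

variable {E : Type*} [NormedAddCommGroup E] [NormedSpace ℝ E] {f : E → ℝ} {f' : E →L[ℝ] ℝ}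
  {x : E}

theorem ConvexOn.add_fderiv_sub_le (hf : ConvexOn ℝ Set.univ f) (hd : HasFDerivAt f f' x)
    (y : E) : f x + f' (y - x) ≤ f y := by
  have hline : ConvexOn ℝ Set.univ (f ∘ AffineMap.lineMap (k := ℝ) x y) := by
    simpa using hf.comp_affineMap (AffineMap.lineMap (k := ℝ) x y)
  have hderiv : HasDerivAt (f ∘ AffineMap.lineMap (k := ℝ) x y) (f' (y - x)) 0 := by
    refine HasFDerivAt.comp_hasDerivAt _ ?_ AffineMap.hasDerivAt_lineMap
    simpa using hd
  have := hline.le_slope_of_hasDerivAt (Set.mem_univ _) (Set.mem_univ _) zero_lt_one hderiv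
  simp only [slope_def_field, Function.comp_apply, AffineMap.lineMap_apply_zero,
    AffineMap.lineMap_apply_one, sub_zero, div_one] at this
  linarith

theorem ConcaveOn.le_add_fderiv_sub (hf : ConcaveOn ℝ Set.univ f) (hd : HasFDerivAt f f' x)
    (y : E) : f y ≤ f x + f' (y - x) := by
  have := hf.neg.add_fderiv_sub_le hd.neg y
  simp only [Pi.neg_apply, neg_apply] at this
  linarith

end Convexity

theorem ContinuousLinearMap.apply_eq_sum_mul_single {ι : Type*} [Fintype ι] [DecidableEq ι]
    (A : (ι → ℝ) →L[ℝ] ℝ) (w : ι → ℝ) : A w = ∑ i, w i * A (Pi.single i 1) := by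
  conv_lhs => rw [pi_eq_sum_univ' w, map_sum]
  simp only [map_smul, smul_eq_mul]

theorem HasFDerivAt.hasDerivAt_update {ι : Type*} [Fintype ι] [DecidableEq ι]
    {f : (ι → ℝ) → ℝ} {f' : (ι → ℝ) →L[ℝ] ℝ} {x : ι → ℝ} (hd : HasFDerivAt f f' x) (i : ι) :
    HasDerivAt (fun z => f (Function.update x i z)) (f' (Pi.single i 1)) (x i) :=
  (show HasFDerivAt f f' (Function.update x i (x i)) by simpa using hd).comp_hasDerivAt _
    (_root_.hasDerivAt_update x i (x i))

theorem ConvexOn.sum_sub_mul_fderiv_single_le {ι : Type*} [Fintype ι] [DecidableEq ι]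
    {f : (ι → ℝ) → ℝ} {f' : (ι → ℝ) →L[ℝ] ℝ} {x : ι → ℝ} (hf : ConvexOn ℝ Set.univ f)
    (hd : HasFDerivAt f f' x) (y : ι → ℝ) :
    ∑ i, (y i - x i) * f' (Pi.single i 1) ≤ f y - f x := by
  have := hf.add_fderiv_sub_le hd y
  rw [f'.apply_eq_sum_mul_single] at this
  simp only [Pi.sub_apply] at this
  linarith

theorem ConcaveOn.sub_le_sum_sub_mul_fderiv_single {ι : Type*} [Fintype ι] [DecidableEq ι]
    {f : (ι → ℝ) → ℝ} {f' : (ι → ℝ) →L[ℝ] ℝ} {x : ι → ℝ} (hf : ConcaveOn ℝ Set.univ f)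
    (hd : HasFDerivAt f f' x) (y : ι → ℝ) :
    f y - f x ≤ ∑ i, (y i - x i) * f' (Pi.single i 1) := by
  have := hf.le_add_fderiv_sub hd y
  rw [f'.apply_eq_sum_mul_single] at this
  simp only [Pi.sub_apply] at this
  linarith

/-- `D_P(y, a)` for the primitive `P(s) = ∫_a^s φ`, whose derivative at `a` is `φ a`. -/
noncomputable def integralBregmanDiv (φ : ℝ → ℝ) (y a : ℝ) : ℝ :=
  (∫ u in a..y, φ u) - φ a * (y - a)

theorem HasDerivAt.integralBregmanDiv {φ : ℝ → ℝ} (hφ : Continuous φ) (a : ℝ) {y : ℝ → ℝ}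
    {y' t : ℝ} (hy : HasDerivAt y y' t) :
    HasDerivAt (fun s => integralBregmanDiv φ (y s) a) ((φ (y t) - φ a) * y') t := by
  have hprim : HasDerivAt (fun z => ∫ u in a..z, φ u) (φ (y t)) (y t) :=
    (hφ.integral_hasStrictDerivAt a (y t)).hasDerivAt
  unfold _root_.integralBregmanDiv
  exact ((hprim.comp t hy).sub ((hy.sub_const a).const_mul (φ a))).congr_deriv (by ring)

/-- The velocity `[a]^{[0,1]}_l`: the projection of `a` onto the tangent cone of `[0,1]` at `l`. -/
noncomputable def tangentProjUnitInterval (l a : ℝ) : ℝ :=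
  if l = 0 then max 0 a else if l = 1 then min 0 a else a

theorem mul_tangentProjUnitInterval_le {g : ℝ → ℝ} (hg : Monotone g) {c : ℝ}
    (hc : c ∈ Set.Icc (0 : ℝ) 1) (l a : ℝ) :
    (g l - g c) * tangentProjUnitInterval l a ≤ (g l - g c) * a := by
  unfold tangentProjUnitInterval
  split_ifs with h0 h1
  · subst h0
    exact mul_le_mul_of_nonpos_left (le_max_right _ _) (sub_nonpos.2 (hg hc.1))
  · subst h1
    exact mul_le_mul_of_nonneg_left (min_le_right _ _) (sub_nonneg.2 (hg hc.2))
  · exact le_rfl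

theorem continuous_time_saddle_point_flow_bregman_lyapunov_general
    (n : ℕ)
    (p : Fin n → ℝ → ℝ) (q : {e : Fin n × Fin n // e.1 ≠ e.2} → ℝ → ℝ)
    (hpcont : ∀ i, Continuous (p i))
    (hqcont : ∀ e, Continuous (q e)) (hqmono : ∀ e, Monotone (q e))
    (L : (Fin n → ℝ) → ({e : Fin n × Fin n // e.1 ≠ e.2} → ℝ) → ℝ)
    (hL : ContDiff ℝ 1
      (fun uv : (Fin n → ℝ) × ({e : Fin n × Fin n // e.1 ≠ e.2} → ℝ) => L uv.1 uv.2))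
    (hconv : ∀ v, ConvexOn ℝ Set.univ (fun u => L u v))
    (hconc : ∀ u, ConcaveOn ℝ Set.univ (fun v => L u v))
    (xbar : Fin n → ℝ) (lbar : {e : Fin n × Fin n // e.1 ≠ e.2} → ℝ)
    (hlbar : ∀ e, lbar e ∈ Set.Icc (0:ℝ) 1)
    (hsaddle : ∀ (xv : Fin n → ℝ) (lv : {e : Fin n × Fin n // e.1 ≠ e.2} → ℝ),
      (∀ e, lv e ∈ Set.Icc (0:ℝ) 1) →
      L (fun i => p i (xbar i)) (fun e => q e (lv e))
          ≤ L (fun i => p i (xbar i)) (fun e => q e (lbar e)) ∧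
      L (fun i => p i (xbar i)) (fun e => q e (lbar e))
          ≤ L (fun i => p i (xv i)) (fun e => q e (lbar e)))
    (x : ℝ → Fin n → ℝ) (lam : ℝ → {e : Fin n × Fin n // e.1 ≠ e.2} → ℝ)
    (hlam01 : ∀ t, 0 ≤ t → ∀ e, lam t e ∈ Set.Icc (0:ℝ) 1)
    (hxdyn : ∀ t, 0 ≤ t → ∀ i, HasDerivAt (fun s => x s i)
      (-(deriv (fun z => L (Function.update (fun i' => p i' (x t i')) i z)
          (fun e => q e (lam t e))) (p i (x t i)))) t)
    (hldyn : ∀ t, 0 ≤ t → ∀ e, HasDerivAt (fun s => lam s e)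
      (if lam t e = 0 then
        max 0 (deriv (fun z => L (fun i' => p i' (x t i'))
          (Function.update (fun e' => q e' (lam t e')) e z)) (q e (lam t e)))
      else if lam t e = 1 then
        min 0 (deriv (fun z => L (fun i' => p i' (x t i'))
          (Function.update (fun e' => q e' (lam t e')) e z)) (q e (lam t e)))
      else
        deriv (fun z => L (fun i' => p i' (x t i'))
          (Function.update (fun e' => q e' (lam t e')) e z)) (q e (lam t e))) t) :
    ∀ t, 0 ≤ t → ∃ dV : ℝ,
      HasDerivAt (fun s =>
        (∑ i, ((∫ u in (xbar i)..(x s i), p i u) - p i (xbar i) * (x s i - xbar i))) +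
        ∑ e, ((∫ u in (lbar e)..(lam s e), q e u) - q e (lbar e) * (lam s e - lbar e)))
        dV t ∧ dV ≤ 0 := by
  intro t ht
  have hLd := hL.differentiable one_ne_zero
  have hA := (show DifferentiableAt ℝ (fun w => L w (fun e => q e (lam t e)))
    (fun i => p i (x t i)) by fun_prop).hasFDerivAt
  have hB := (show DifferentiableAt ℝ (fun w => L (fun i => p i (x t i)) w)
    (fun e => q e (lam t e)) by fun_prop).hasFDerivAt
  set A := fderiv ℝ (fun w => L w (fun e => q e (lam t e))) (fun i => p i (x t i))
  set B := fderiv ℝ (fun w => L (fun i => p i (x t i)) w) (fun e => q e (lam t e))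
  have hx (i) : HasDerivAt (fun s => x s i) (-A (Pi.single i 1)) t := by
    simpa only [(hA.hasDerivAt_update i).deriv] using hxdyn t ht i
  have hl (e) : HasDerivAt (fun s => lam s e)
      (tangentProjUnitInterval (lam t e) (B (Pi.single e 1))) t := by
    simpa only [tangentProjUnitInterval, (hB.hasDerivAt_update e).deriv] using hldyn t ht e
  refine ⟨_, (HasDerivAt.fun_sum fun i _ => (hx i).integralBregmanDiv (hpcont i) (xbar i)).add
    (HasDerivAt.fun_sum fun e _ => (hl e).integralBregmanDiv (hqcont e) (lbar e)), ?_⟩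
  obtain ⟨hmax, hmin⟩ := hsaddle (x t) (lam t) (hlam01 t ht)
  have hprimal := (hconv _).sum_sub_mul_fderiv_single_le hA (fun i => p i (xbar i))
  have hdual := (hconc _).sub_le_sum_sub_mul_fderiv_single hB (fun e => q e (lbar e))
  have hproj : ∑ e, (q e (lam t e) - q e (lbar e)) *
        tangentProjUnitInterval (lam t e) (B (Pi.single e 1))
      ≤ ∑ e, (q e (lam t e) - q e (lbar e)) * B (Pi.single e 1) :=
    Finset.sum_le_sum fun e _ => mul_tangentProjUnitInterval_le (hqmono e) (hlbar e) _ _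
  have hprimal_eq : ∑ i, (p i (x t i) - p i (xbar i)) * -A (Pi.single i 1)
      = ∑ i, (p i (xbar i) - p i (x t i)) * A (Pi.single i 1) :=
    Finset.sum_congr rfl fun i _ => by ring
  have hdual_eq : ∑ e, (q e (lam t e) - q e (lbar e)) * B (Pi.single e 1)
      = -∑ e, (q e (lbar e) - q e (lam t e)) * B (Pi.single e 1) := by
    rw [← Finset.sum_neg_distrib]
    exact Finset.sum_congr rfl fun e _ => by ring
  linarith

/-- continuous-time constrained saddle-point dynamics: along the
projected gradient flow for the saddle-point problem
`min_x max_{λ ∈ [0,1]^M} L(p(x), q(λ))`, the sum of Bregman divergences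
`V(x,λ) = ∑ᵢ D_{Pᵢ}(xᵢ, x̄ᵢ) + ∑ₑ D_{Qₑ}(λₑ, λ̄ₑ)` to a saddle point `(x̄, λ̄)` is
nonincreasing: its time derivative exists and is nonpositive at every `t ≥ 0`.
Here `Pᵢ(s) = ∫_{x̄ᵢ}^s pᵢ`, so `D_{Pᵢ}(xᵢ, x̄ᵢ) = ∫_{x̄ᵢ}^{xᵢ} pᵢ − pᵢ(x̄ᵢ)(xᵢ − x̄ᵢ)`
(and analogously for `Qₑ`), and the dual flow is projected onto the unit box. -/
theorem continuous_time_saddle_point_flow_bregman_lyapunov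
    (n : ℕ) (hn : 1 ≤ n)
    (p : Fin n → ℝ → ℝ) (q : {e : Fin n × Fin n // e.1 ≠ e.2} → ℝ → ℝ)
    (hpcont : ∀ i, Continuous (p i)) (hpmono : ∀ i, Monotone (p i))
    (hp0 : ∀ i, p i 0 = 0)
    (hqcont : ∀ e, Continuous (q e)) (hqmono : ∀ e, Monotone (q e))
    (hq0 : ∀ e, q e 0 = 0)
    (L : (Fin n → ℝ) → ({e : Fin n × Fin n // e.1 ≠ e.2} → ℝ) → ℝ)
    (hL : ContDiff ℝ 1
      (fun uv : (Fin n → ℝ) × ({e : Fin n × Fin n // e.1 ≠ e.2} → ℝ) => L uv.1 uv.2))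
    (hconv : ∀ v, ConvexOn ℝ Set.univ (fun u => L u v))
    (hconc : ∀ u, ConcaveOn ℝ Set.univ (fun v => L u v))
    (xbar : Fin n → ℝ) (lbar : {e : Fin n × Fin n // e.1 ≠ e.2} → ℝ)
    (hlbar : ∀ e, lbar e ∈ Set.Icc (0:ℝ) 1)
    (hsaddle : ∀ (xv : Fin n → ℝ) (lv : {e : Fin n × Fin n // e.1 ≠ e.2} → ℝ),
      (∀ e, lv e ∈ Set.Icc (0:ℝ) 1) →
      L (fun i => p i (xbar i)) (fun e => q e (lv e))
          ≤ L (fun i => p i (xbar i)) (fun e => q e (lbar e)) ∧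
      L (fun i => p i (xbar i)) (fun e => q e (lbar e))
          ≤ L (fun i => p i (xv i)) (fun e => q e (lbar e)))
    (x : ℝ → Fin n → ℝ) (lam : ℝ → {e : Fin n × Fin n // e.1 ≠ e.2} → ℝ)
    (hlam01 : ∀ t, 0 ≤ t → ∀ e, lam t e ∈ Set.Icc (0:ℝ) 1)
    (hxdyn : ∀ t, 0 ≤ t → ∀ i, HasDerivAt (fun s => x s i)
      (-(deriv (fun z => L (Function.update (fun i' => p i' (x t i')) i z)
          (fun e => q e (lam t e))) (p i (x t i)))) t)
    (hldyn : ∀ t, 0 ≤ t → ∀ e, HasDerivAt (fun s => lam s e)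
      (if lam t e = 0 then
        max 0 (deriv (fun z => L (fun i' => p i' (x t i'))
          (Function.update (fun e' => q e' (lam t e')) e z)) (q e (lam t e)))
      else if lam t e = 1 then
        min 0 (deriv (fun z => L (fun i' => p i' (x t i'))
          (Function.update (fun e' => q e' (lam t e')) e z)) (q e (lam t e)))
      else
        deriv (fun z => L (fun i' => p i' (x t i'))
          (Function.update (fun e' => q e' (lam t e')) e z)) (q e (lam t e))) t) :
    ∀ t, 0 ≤ t → ∃ dV : ℝ,
      HasDerivAt (fun s =>
        (∑ i, ((∫ u in (xbar i)..(x s i), p i u) - p i (xbar i) * (x s i - xbar i))) +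
        ∑ e, ((∫ u in (lbar e)..(lam s e), q e u) - q e (lbar e) * (lam s e - lbar e)))
        dV t ∧ dV ≤ 0 :=
  continuous_time_saddle_point_flow_bregman_lyapunov_general n p q hpcont hqcont hqmono L hL hconv
    hconc xbar lbar hlbar hsaddle x lam hlam01 hxdyn hldyn
end
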